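/- Under the stated hypotheses, for all indices 1 ≤ i, j ≤ n−1 with |i−j| = 1, the mixed relations v_i σ_j v_i = v_j σ_i v_j and v_i τ_j v_i = v_j τ_i v_j hold in M. -/

import Mathlib

/-!
Moving an element from position `i + 1` to position `i + 2` is conjugation by `v_{i+1} v_{i+2}`,
because `v_{i+2}` commutes with `v_1, …, v_i` and so slides through the old word. Hence
`v_{i+1} x_{i+2} v_{i+1} = v_{i+1}² v_{i+2} x_{i+1} v_{i+2} v_{i+1}² = v_{i+2} x_{i+1} v_{i+2}`.
-/

namespace VSBpaper

/-- `ascV v a b = v a * v (a+1) * ⋯ * v b` (equal to `1` when `b < a`). -/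
def ascV {M : Type*} [Monoid M] (v : ℕ → M) (a b : ℕ) : M :=
  ((List.range' a (b + 1 - a)).map v).prod

/-- `descV v a b = v b * v (b-1) * ⋯ * v a` (equal to `1` when `b < a`). -/
def descV {M : Type*} [Monoid M] (v : ℕ → M) (a b : ℕ) : M :=
  (((List.range' a (b + 1 - a)).map v).reverse).prod

/-- `shift v i x = (v_i ⋯ v_1)(v_{i+1} ⋯ v_2) x (v_2 ⋯ v_{i+1})(v_1 ⋯ v_i)` is `x` moved from
position `1` to position `i + 1`; thus `σ_{i+1} = shift v i σ`. -/
def shift {M : Type*} [Monoid M] (v : ℕ → M) (i : ℕ) (x : M) : M :=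
  descV v 1 i * descV v 2 (i + 1) * x * ascV v 2 (i + 1) * ascV v 1 i

section Words

variable {M : Type*} [Monoid M] (v : ℕ → M)

lemma ascV_succ {a b : ℕ} (h : a ≤ b + 1) : ascV v a (b + 1) = ascV v a b * v (b + 1) := by
  rw [ascV, ascV, show b + 1 + 1 - a = b + 1 - a + 1 by omega, List.range'_concat,
    show a + 1 * (b + 1 - a) = b + 1 by omega]
  simp

lemma descV_succ {a b : ℕ} (h : a ≤ b + 1) : descV v a (b + 1) = v (b + 1) * descV v a b := by
  rw [descV, descV, show b + 1 + 1 - a = b + 1 - a + 1 by omega, List.range'_concat,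
    show a + 1 * (b + 1 - a) = b + 1 by omega]
  simp

lemma ascV_commute {j a b : ℕ} (h : ∀ k, a ≤ k → k ≤ b → Commute (v j) (v k)) :
    Commute (v j) (ascV v a b) :=
  Commute.list_prod_right _ _ fun _ hx ↦ by
    obtain ⟨k, hk, rfl⟩ := List.mem_map.1 hx
    rw [List.mem_range'_1] at hk
    exact h k hk.1 (by omega)

lemma descV_commute {j a b : ℕ} (h : ∀ k, a ≤ k → k ≤ b → Commute (v j) (v k)) :
    Commute (v j) (descV v a b) :=
  Commute.list_prod_right _ _ fun _ hx ↦ by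
    obtain ⟨k, hk, rfl⟩ := List.mem_map.1 (List.mem_reverse.1 hx)
    rw [List.mem_range'_1] at hk
    exact h k hk.1 (by omega)

@[simp]
lemma shift_zero (x : M) : shift v 0 x = x := by
  simp [shift, ascV, descV]

lemma shift_succ {i : ℕ} (h : ∀ k, 1 ≤ k → k ≤ i → Commute (v (i + 2)) (v k)) (x : M) :
    shift v (i + 1) x = v (i + 1) * v (i + 2) * shift v i x * v (i + 2) * v (i + 1) := by
  have hdesc := (descV_commute v h).eq
  have hasc := (ascV_commute v h).eq
  simp only [shift, descV_succ v (show 1 ≤ i + 1 by omega),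
    descV_succ v (show 2 ≤ i + 1 + 1 by omega), ascV_succ v (show 1 ≤ i + 1 by omega),
    ascV_succ v (show 2 ≤ i + 1 + 1 by omega), mul_assoc]
  rw [← mul_assoc (descV v 1 i), ← hdesc, ← mul_assoc (v (i + 2)) (ascV v 1 i), hasc]
  simp only [mul_assoc]

lemma mul_shift_succ_mul {i : ℕ} (h : ∀ k, 1 ≤ k → k ≤ i → Commute (v (i + 2)) (v k))
    (hsq : v (i + 1) * v (i + 1) = 1) (x : M) :
    v (i + 1) * shift v (i + 1) x * v (i + 1) = v (i + 2) * shift v i x * v (i + 2) := by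
  rw [shift_succ v h]
  simp only [mul_assoc]
  rw [← mul_assoc (v (i + 1)) (v (i + 1)), hsq, one_mul, mul_one]

end Words

section Relations

variable {M : Type*} [Monoid M] {n : ℕ} {v : ℕ → M}
  (hvcomm : ∀ i j : ℕ, 1 ≤ i → i ≤ n - 1 → 1 ≤ j → j ≤ n - 1 → (i + 1 < j ∨ j + 1 < i) →
    v i * v j = v j * v i)
  {x : M} {xs : ℕ → M} (hx1 : xs 1 = x)
  (hxdef : ∀ i : ℕ, 1 ≤ i → i ≤ n - 2 →
    xs (i + 1) = descV v 1 i * descV v 2 (i + 1) * x * ascV v 2 (i + 1) * ascV v 1 i)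
include hx1 hxdef

lemma eq_shift {i : ℕ} (hi : i ≤ n - 2) : xs (i + 1) = shift v i x := by
  rcases Nat.eq_zero_or_pos i with rfl | hpos
  · rw [hx1, shift_zero]
  · exact hxdef i hpos hi

include hvcomm in
lemma mul_shifted_mul_of_adjacent (hvsq : ∀ i : ℕ, 1 ≤ i → i ≤ n - 1 → v i * v i = 1)
    {i j : ℕ} (hi : 1 ≤ i) (hin : i ≤ n - 1) (hj : 1 ≤ j) (hjn : j ≤ n - 1)
    (hadj : i + 1 = j ∨ j + 1 = i) :
    v i * xs j * v i = v j * xs i * v j := by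
  have key : ∀ k, k + 2 ≤ n - 1 →
      v (k + 1) * xs (k + 2) * v (k + 1) = v (k + 2) * xs (k + 1) * v (k + 2) := fun k hk ↦ by
    rw [eq_shift hx1 hxdef (i := k + 1) (by omega), eq_shift hx1 hxdef (i := k) (by omega)]
    exact mul_shift_succ_mul v (fun m hm hmk ↦ hvcomm _ _ (by omega) hk hm (by omega) (by omega))
      (hvsq _ (by omega) (by omega)) x
  rcases hadj with rfl | rfl
  · obtain ⟨k, rfl⟩ := Nat.exists_eq_add_of_le' hi
    exact key k hjn
  · obtain ⟨k, rfl⟩ := Nat.exists_eq_add_of_le' hj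
    exact (key k hin).symm

end Relations

theorem mixed_virtual_relations_general {M : Type*} [Monoid M] (n : ℕ) (v : ℕ → M)
    (hvcomm : ∀ i j : ℕ, 1 ≤ i → i ≤ n - 1 → 1 ≤ j → j ≤ n - 1 → (i + 1 < j ∨ j + 1 < i) →
      v i * v j = v j * v i)
    (hvsq : ∀ i : ℕ, 1 ≤ i → i ≤ n - 1 → v i * v i = 1)
    (σ τ : M)
    (σs τs : ℕ → M)
    (hσ1 : σs 1 = σ) (hτ1 : τs 1 = τ)
    (hσdef : ∀ i : ℕ, 1 ≤ i → i ≤ n - 2 →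
      σs (i + 1) = descV v 1 i * descV v 2 (i + 1) * σ * ascV v 2 (i + 1) * ascV v 1 i)
    (hτdef : ∀ i : ℕ, 1 ≤ i → i ≤ n - 2 →
      τs (i + 1) = descV v 1 i * descV v 2 (i + 1) * τ * ascV v 2 (i + 1) * ascV v 1 i) :
    ∀ i j : ℕ, 1 ≤ i → i ≤ n - 1 → 1 ≤ j → j ≤ n - 1 → (i + 1 = j ∨ j + 1 = i) →
      v i * σs j * v i = v j * σs i * v j ∧ v i * τs j * v i = v j * τs i * v j :=
  fun _ _ hi hin hj hjn hadj ↦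
    ⟨mul_shifted_mul_of_adjacent hvcomm hσ1 hσdef hvsq hi hin hj hjn hadj,
      mul_shifted_mul_of_adjacent hvcomm hτ1 hτdef hvsq hi hin hj hjn hadj⟩

/-- **Lemma 4.8.** For all `1 ≤ i, j ≤ n-1` with `|i-j| = 1`, the mixed relations `v_i σ_j v_i = v_j σ_i v_j` and `v_i τ_j v_i = v_j τ_i v_j` hold in `M`. -/
theorem mixed_virtual_relations {M : Type*} [Monoid M] (n : ℕ) (hn : 2 ≤ n) (v : ℕ → M)
    (hvbraid : ∀ i j : ℕ, 1 ≤ i → i ≤ n - 1 → 1 ≤ j → j ≤ n - 1 → (i + 1 = j ∨ j + 1 = i) →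
      v i * v j * v i = v j * v i * v j)
    (hvcomm : ∀ i j : ℕ, 1 ≤ i → i ≤ n - 1 → 1 ≤ j → j ≤ n - 1 → (i + 1 < j ∨ j + 1 < i) →
      v i * v j = v j * v i)
    (hvsq : ∀ i : ℕ, 1 ≤ i → i ≤ n - 1 → v i * v i = 1)
    (σ σ' τ : M)
    (hcomm_στ : σ * τ = τ * σ)
    (hinv : σ * σ' = 1) (hinv' : σ' * σ = 1)
    (hτv : ∀ i : ℕ, 3 ≤ i → i ≤ n - 1 → τ * v i = v i * τ)
    (hσv : ∀ i : ℕ, 3 ≤ i → i ≤ n - 1 → σ * v i = v i * σ)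
    (hbraid_base : 2 ≤ n - 1 →
      σ * (v 1 * v 2 * σ * v 2 * v 1) * σ =
        (v 1 * v 2 * σ * v 2 * v 1) * σ * (v 1 * v 2 * σ * v 2 * v 1))
    (hmixed_base : 2 ≤ n - 1 →
      τ * (v 1 * v 2 * σ * v 2 * v 1) * σ =
        (v 1 * v 2 * σ * v 2 * v 1) * σ * (v 1 * v 2 * τ * v 2 * v 1))
    (hfar_σσ : 3 ≤ n - 1 →
      σ * (v 2 * v 3 * v 1 * v 2 * σ * v 2 * v 1 * v 3 * v 2) =
        (v 2 * v 3 * v 1 * v 2 * σ * v 2 * v 1 * v 3 * v 2) * σ)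
    (hfar_τσ : 3 ≤ n - 1 →
      τ * (v 2 * v 3 * v 1 * v 2 * σ * v 2 * v 1 * v 3 * v 2) =
        (v 2 * v 3 * v 1 * v 2 * σ * v 2 * v 1 * v 3 * v 2) * τ)
    (hfar_ττ : 3 ≤ n - 1 →
      τ * (v 2 * v 3 * v 1 * v 2 * τ * v 2 * v 1 * v 3 * v 2) =
        (v 2 * v 3 * v 1 * v 2 * τ * v 2 * v 1 * v 3 * v 2) * τ)
    (σs σs' τs : ℕ → M)
    (hσ1 : σs 1 = σ) (hσ'1 : σs' 1 = σ') (hτ1 : τs 1 = τ)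
    (hσdef : ∀ i : ℕ, 1 ≤ i → i ≤ n - 2 →
      σs (i + 1) = descV v 1 i * descV v 2 (i + 1) * σ * ascV v 2 (i + 1) * ascV v 1 i)
    (hσ'def : ∀ i : ℕ, 1 ≤ i → i ≤ n - 2 →
      σs' (i + 1) = descV v 1 i * descV v 2 (i + 1) * σ' * ascV v 2 (i + 1) * ascV v 1 i)
    (hτdef : ∀ i : ℕ, 1 ≤ i → i ≤ n - 2 →
      τs (i + 1) = descV v 1 i * descV v 2 (i + 1) * τ * ascV v 2 (i + 1) * ascV v 1 i) :
    ∀ i j : ℕ, 1 ≤ i → i ≤ n - 1 → 1 ≤ j → j ≤ n - 1 → (i + 1 = j ∨ j + 1 = i) →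
      v i * σs j * v i = v j * σs i * v j ∧ v i * τs j * v i = v j * τs i * v j :=
  mixed_virtual_relations_general n v hvcomm hvsq σ τ σs τs hσ1 hτ1 hσdef hτdef

end VSBpaper
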